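/- arXiv:2605.06102 — 2 statements merged into one kernel-verified Lean document; each statement's English description precedes it below -/
import Mathlib

section
/- There exist a strictly increasing sequence (r_j)_{j≥1} of real numbers with r_1 = 1 and a sequence (s_k)_{k≥1} in (0,1) with s_k → 0 such that the sums A_k = ∑_{j=1}^∞ (-1)^{j+1} r_j^{-s_k} satisfy A_{s_{2k}} → 0 and A_{s_{2k-1}} → 1 as k → ∞. -/
open Filter Real

namespace Stmt11
noncomputable section

def a (j : ℕ) : ℕ := 2 ^ (j^2) - 1
def r (j : ℕ) : ℝ := 2 ^ (a j)
def D (k : ℕ) : ℝ := ((k:ℝ)+2)^2 * 2^(k^2)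
def s (k : ℕ) : ℝ := (D k)⁻¹
def t (k j : ℕ) : ℝ := r j ^ (-(s k))
def f (k j : ℕ) : ℝ := (-1:ℝ)^j * t k j
def A (k : ℕ) : ℝ := ∑' j, f k j

lemma ha (j : ℕ) : a j + 1 = 2 ^ (j^2) :=
  Nat.sub_add_cancel (Nat.one_le_two_pow)

lemma a_zero : a 0 = 0 := rfl

lemma a_ge (j : ℕ) : j ≤ a j := by
  have h1 : j + 1 ≤ 2 ^ j := Nat.lt_two_pow_self (n := j)
  have h2 : (2:ℕ) ^ j ≤ 2 ^ (j^2) :=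
    Nat.pow_le_pow_right (by norm_num) (Nat.le_self_pow two_ne_zero j)
  have h3 := ha j
  omega

lemma a_strictMono : StrictMono a := by
  intro i j hij
  have : (2:ℕ) ^ (i^2) < 2 ^ (j^2) :=
    Nat.pow_lt_pow_right one_lt_two (by nlinarith)
  have := ha i; have := ha j; omega

lemma r_pos (j : ℕ) : 0 < r j := by unfold r; positivity

lemma r_strictMono : StrictMono r := fun i j hij => by
  unfold r
  exact pow_lt_pow_right₀ one_lt_two (a_strictMono hij)

lemma r_zero : r 0 = 1 := by simp [r, a_zero]

lemma D_pos (k : ℕ) : 0 < D k := by unfold D; positivity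

lemma D_ge_four (k : ℕ) : 4 ≤ D k := by
  have h1 : (4:ℝ) ≤ ((k:ℝ)+2)^2 := by nlinarith [Nat.cast_nonneg (α := ℝ) k]
  have h2 : (1:ℝ) ≤ 2^(k^2) := one_le_pow₀ (by norm_num)
  calc (4:ℝ) = 4 * 1 := by ring
  _ ≤ ((k:ℝ)+2)^2 * 2^(k^2) := mul_le_mul h1 h2 (by norm_num) (by positivity)
  _ = D k := rfl

lemma s_pos (k : ℕ) : 0 < s k := inv_pos.mpr (D_pos k)

lemma s_lt_one (k : ℕ) : s k < 1 := by
  have := D_ge_four k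
  rw [s, inv_lt_one_iff₀]
  right; linarith

lemma tendsto_inv_k2 : Tendsto (fun k : ℕ => ((k:ℝ)+2)⁻¹) atTop (nhds 0) := by
  apply Tendsto.inv_tendsto_atTop
  apply tendsto_atTop_add_const_right
  exact tendsto_natCast_atTop_atTop

lemma s_tendsto : Tendsto s atTop (nhds 0) := by
  have hle : ∀ k : ℕ, s k ≤ ((k:ℝ)+2)⁻¹ := by
    intro k
    rw [s]
    apply inv_anti₀ (by positivity)
    have h2 : (1:ℝ) ≤ 2^(k^2) := one_le_pow₀ (by norm_num)
    have h3 : ((k:ℝ)+2) ≤ ((k:ℝ)+2)^2 := by nlinarith [Nat.cast_nonneg (α := ℝ) k]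
    have h4 : ((k:ℝ)+2)^2 ≤ D k := by
      rw [D]; nlinarith [Nat.cast_nonneg (α := ℝ) k]
    linarith
  exact squeeze_zero (fun k => (s_pos k).le) hle tendsto_inv_k2

lemma t_eq (k j : ℕ) : t k j = Real.exp (-(s k * ((a j : ℝ) * Real.log 2))) := by
  rw [t, r, Real.rpow_def_of_pos (by positivity), Real.log_pow]
  ring_nf

lemma t_pos (k j : ℕ) : 0 < t k j := by rw [t_eq]; exact Real.exp_pos _

lemma log2_nonneg : (0:ℝ) ≤ Real.log 2 := Real.log_nonneg (by norm_num)

lemma t_le_one (k j : ℕ) : t k j ≤ 1 := by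
  rw [t_eq, Real.exp_le_one_iff, neg_nonpos]
  exact mul_nonneg (s_pos k).le (mul_nonneg (by positivity) log2_nonneg)

lemma one_sub_t_le (k j : ℕ) : 1 - t k j ≤ s k * ((a j : ℝ) * Real.log 2) := by
  rw [t_eq]
  have := Real.add_one_le_exp (-(s k * ((a j : ℝ) * Real.log 2)))
  linarith

lemma head_bound {k j : ℕ} (hj : j ≤ k) :
    s k * ((a j : ℝ) * Real.log 2) ≤ (((k:ℝ)+2)^2)⁻¹ := by
  have hlog : Real.log 2 ≤ 1 := by
    have := Real.log_two_lt_d9; linarith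
  have haj : (a j : ℝ) ≤ 2^(k^2) := by
    have h1 : a j ≤ a k := a_strictMono.monotone hj
    have h2 : a k ≤ 2^(k^2) := by have := ha k; omega
    have h4 : (a j : ℝ) ≤ ((2^(k^2) : ℕ) : ℝ) := by exact_mod_cast le_trans h1 h2
    calc (a j : ℝ) ≤ ((2^(k^2) : ℕ) : ℝ) := h4
    _ = 2^(k^2) := by push_cast; ring
  have h1 : s k * ((a j:ℝ) * Real.log 2) ≤ s k * ((2:ℝ)^(k^2) * 1) := by
    apply mul_le_mul_of_nonneg_left _ (s_pos k).le
    exact mul_le_mul haj hlog log2_nonneg (by positivity)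
  have h2 : s k * ((2:ℝ)^(k^2) * 1) = (((k:ℝ)+2)^2)⁻¹ := by
    rw [s, D, mul_one, mul_inv]
    have h3 : ((2:ℝ)^(k^2))⁻¹ * 2^(k^2) = 1 := inv_mul_cancel₀ (by positivity)
    rw [mul_assoc, h3, mul_one]
  linarith

lemma two_mul_add_one_le {n : ℕ} (hn : 3 ≤ n) : 2*n+1 ≤ 2^n := by
  induction n with
  | zero => omega
  | succ m ih =>
    rcases Nat.lt_or_ge m 3 with h | h
    · have hm : m = 2 := by omega
      subst hm; norm_num
    · have h1 := ih h
      have h2 : (2:ℕ)^m ≥ 8 :=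
        calc (2:ℕ)^m ≥ 2^3 := Nat.pow_le_pow_right (by norm_num) h
        _ = 8 := by norm_num
      rw [pow_succ]
      omega

lemma sq_le_pow {k : ℕ} (hk : 7 ≤ k) : (k+2)^2 ≤ 2^k := by
  induction k with
  | zero => omega
  | succ m ih =>
    rcases Nat.lt_or_ge m 7 with h | h
    · have hm : m = 6 := by omega
      subst hm; norm_num
    · have h1 := ih h
      have hb : (m+1+2)^2 ≤ 2*(m+2)^2 := by nlinarith
      calc (m+1+2)^2 ≤ 2*(m+2)^2 := hb
      _ ≤ 2*2^m := by omega
      _ = 2^(m+1) := by rw [pow_succ]; ring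

lemma key_nat {k j : ℕ} (hk : 7 ≤ k) (hj : k + 1 ≤ j) :
    (j + k) * ((k+2)^2 * 2^(k^2)) ≤ a j := by
  obtain ⟨d, rfl⟩ : ∃ d, j = k + 1 + d := ⟨j - (k+1), by omega⟩
  have h1 : 2*(k+d)+1 ≤ 2^(k+d) := two_mul_add_one_le (by omega)
  have h2 : (k+2)^2 ≤ 2^k := sq_le_pow hk
  have h3 : (k+1+d+k) * (k+2)^2 ≤ 2^(k+d) * 2^k :=
    Nat.mul_le_mul (by omega) h2
  have h4 : (2:ℕ)^(k+d) * 2^k = 2^(2*k+d) := by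
    rw [← pow_add]; ring_nf
  have h5 : (k+1+d+k) * ((k+2)^2 * 2^(k^2)) ≤ 2^(2*k+d) * 2^(k^2) := by
    calc (k+1+d+k) * ((k+2)^2 * 2^(k^2)) = ((k+1+d+k) * (k+2)^2) * 2^(k^2) := by ring
    _ ≤ 2^(2*k+d) * 2^(k^2) := Nat.mul_le_mul_right _ (h4 ▸ h3)
  have h6 : (2:ℕ)^(2*k+d) * 2^(k^2) = 2^(k^2+2*k+d) := by rw [← pow_add]; ring_nf
  have h7 : k^2+2*k+d < (k+1+d)^2 := by nlinarith
  have h8 : (2:ℕ)^(k^2+2*k+d) < 2^((k+1+d)^2) := Nat.pow_lt_pow_right one_lt_two h7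
  have h9 := ha (k+1+d)
  omega

lemma tail_bound {k j : ℕ} (hk : 7 ≤ k) (hj : k + 1 ≤ j) :
    t k j ≤ (1/2:ℝ)^(j+k) := by
  rw [t_eq]
  have hD := D_pos k
  have hcast : ((j+k : ℕ):ℝ) * D k ≤ (a j : ℝ) := by
    have hkey := key_nat hk hj
    calc ((j+k:ℕ):ℝ) * D k = (((j+k) * ((k+2)^2 * 2^(k^2)) : ℕ) : ℝ) := by
          push_cast [D]; ring
    _ ≤ (a j : ℝ) := by exact_mod_cast hkey
  have hsk : ((j+k:ℕ):ℝ) ≤ s k * (a j : ℝ) := by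
    rw [s]
    have h := (le_div_iff₀ hD).mpr hcast
    rw [div_eq_inv_mul] at h
    exact h
  have hexp : (((j+k:ℕ)):ℝ) * Real.log 2 ≤ s k * ((a j : ℝ) * Real.log 2) := by
    rw [← mul_assoc]
    exact mul_le_mul_of_nonneg_right hsk log2_nonneg
  calc Real.exp (-(s k * ((a j : ℝ) * Real.log 2)))
      ≤ Real.exp (-(((j+k:ℕ):ℝ) * Real.log 2)) := Real.exp_le_exp.mpr (by linarith)
  _ = Real.exp (-Real.log 2) ^ (j+k) := by
        rw [← Real.exp_nat_mul]; ring_nf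
  _ = (1/2:ℝ)^(j+k) := by
        rw [Real.exp_neg, Real.exp_log (by norm_num : (0:ℝ) < 2)]
        norm_num

lemma abs_f (k j : ℕ) : |f k j| = t k j := by
  rw [f, abs_mul, abs_pow, abs_neg, abs_one, one_pow, one_mul,
    abs_of_pos (t_pos k j)]

lemma t_le_geom (k j : ℕ) : t k j ≤ Real.exp (-(s k * Real.log 2)) ^ j := by
  rw [t_eq, ← Real.exp_nat_mul]
  apply Real.exp_le_exp.mpr
  have h1 : (j:ℝ) ≤ (a j : ℝ) := by exact_mod_cast a_ge j
  have h2 : (j:ℝ) * (s k * Real.log 2) ≤ s k * ((a j:ℝ) * Real.log 2) := by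
    rw [show s k * ((a j:ℝ) * Real.log 2) = (a j:ℝ) * (s k * Real.log 2) by ring]
    exact mul_le_mul_of_nonneg_right h1 (mul_nonneg (s_pos k).le log2_nonneg)
  linarith [h2]

lemma summable_f (k : ℕ) : Summable (f k) := by
  have hq0 : (0:ℝ) ≤ Real.exp (-(s k * Real.log 2)) := (Real.exp_pos _).le
  have hq1 : Real.exp (-(s k * Real.log 2)) < 1 := by
    rw [Real.exp_lt_one_iff, neg_lt_zero]
    exact mul_pos (s_pos k) (Real.log_pos (by norm_num))
  have habs : Summable (fun j => |f k j|) := by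
    apply Summable.of_nonneg_of_le (fun j => abs_nonneg _)
      (fun j => (abs_f k j) ▸ t_le_geom k j)
      (summable_geometric_of_lt_one hq0 hq1)
  exact habs.of_abs

lemma partial_tendsto (k : ℕ) :
    Tendsto (fun n => ∑ j ∈ Finset.range n, f k j) atTop (nhds (A k)) :=
  (summable_f k).hasSum.tendsto_sum_nat

lemma main_est {k : ℕ} (hk : 7 ≤ k) :
    |A k - ∑ j ∈ Finset.range (k+1), (-1:ℝ)^j| ≤ ((k:ℝ)+2)⁻¹ + (1/2:ℝ)^(2*k) := by
  have hsum := summable_f k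
  have hsplit := Summable.sum_add_tsum_nat_add (f := f k) (k+1) hsum
  set P := ∑ j ∈ Finset.range (k+1), (-1:ℝ)^j with hP
  set H := ∑ j ∈ Finset.range (k+1), f k j with hH
  set T := ∑' j, f k (j + (k+1)) with hT
  have hA : A k = H + T := by rw [A, ← hsplit]
  have hHbound : |H - P| ≤ ((k:ℝ)+2)⁻¹ := by
    have h1 : H - P = ∑ j ∈ Finset.range (k+1), ((-1:ℝ)^j * (t k j - 1)) := by
      rw [hH, hP, ← Finset.sum_sub_distrib]
      apply Finset.sum_congr rfl
      intro j _
      rw [f]; ring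
    rw [h1]
    calc |∑ j ∈ Finset.range (k+1), ((-1:ℝ)^j * (t k j - 1))|
        ≤ ∑ j ∈ Finset.range (k+1), |(-1:ℝ)^j * (t k j - 1)| :=
          Finset.abs_sum_le_sum_abs _ _
    _ ≤ ∑ j ∈ Finset.range (k+1), (((k:ℝ)+2)^2)⁻¹ := by
        apply Finset.sum_le_sum
        intro j hj
        have hjk : j ≤ k := by
          have := Finset.mem_range.mp hj; omega
        have habs : |(-1:ℝ)^j * (t k j - 1)| = 1 - t k j := by
          rw [abs_mul, abs_pow, abs_neg, abs_one, one_pow, one_mul,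
            abs_of_nonpos (by linarith [t_le_one k j])]
          ring
        rw [habs]
        exact le_trans (one_sub_t_le k j) (head_bound hjk)
    _ = ((k:ℝ)+1) * (((k:ℝ)+2)^2)⁻¹ := by
        rw [Finset.sum_const, Finset.card_range]
        push_cast; ring
    _ ≤ ((k:ℝ)+2)⁻¹ := by
        have hk2 : (0:ℝ) < (k:ℝ)+2 := by positivity
        rw [pow_two, mul_inv, ← mul_assoc]
        have : ((k:ℝ)+1) * ((k:ℝ)+2)⁻¹ ≤ 1 := by
          rw [mul_inv_le_iff₀ hk2]; linarith
        calc ((k:ℝ)+1) * ((k:ℝ)+2)⁻¹ * ((k:ℝ)+2)⁻¹ ≤ 1 * ((k:ℝ)+2)⁻¹ :=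
          mul_le_mul_of_nonneg_right this (by positivity)
        _ = ((k:ℝ)+2)⁻¹ := one_mul _
  have hTbound : |T| ≤ (1/2:ℝ)^(2*k) := by
    have hs2 : Summable (fun j => f k (j + (k+1))) :=
      (summable_nat_add_iff (k+1)).mpr hsum
    have habs : Summable (fun j => |f k (j + (k+1))|) := hs2.abs
    have hgeo : Summable (fun j : ℕ => (1/2:ℝ)^(2*k+1) * (1/2:ℝ)^j) :=
      (summable_geometric_of_lt_one (by norm_num) (by norm_num)).mul_left _
    have hb : ∀ j, |f k (j + (k+1))| ≤ (1/2:ℝ)^(2*k+1) * (1/2:ℝ)^j := by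
      intro j
      rw [abs_f]
      calc t k (j + (k+1)) ≤ (1/2:ℝ)^(j + (k+1) + k) :=
            tail_bound hk (by omega)
      _ = (1/2:ℝ)^(2*k+1) * (1/2:ℝ)^j := by rw [← pow_add]; ring_nf
    calc |T| ≤ ∑' j, |f k (j + (k+1))| := by
          rw [hT]
          simpa using norm_tsum_le_tsum_norm (f := fun j => f k (j + (k+1))) (by simpa using habs)
    _ ≤ ∑' j : ℕ, (1/2:ℝ)^(2*k+1) * (1/2:ℝ)^j := Summable.tsum_le_tsum hb habs hgeo
    _ = (1/2:ℝ)^(2*k+1) * (1 - 1/2)⁻¹ := by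
          rw [tsum_mul_left, tsum_geometric_of_lt_one (by norm_num) (by norm_num)]
    _ = (1/2:ℝ)^(2*k) := by
          rw [pow_succ]; ring
  calc |A k - P| = |(H - P) + T| := by rw [hA]; ring_nf
  _ ≤ |H - P| + |T| := abs_add_le _ _
  _ ≤ ((k:ℝ)+2)⁻¹ + (1/2:ℝ)^(2*k) := add_le_add hHbound hTbound

lemma E_tendsto : Tendsto (fun k : ℕ => ((k:ℝ)+2)⁻¹ + (1/2:ℝ)^(2*k)) atTop (nhds 0) := by
  rw [show (0:ℝ) = 0 + 0 by norm_num]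
  apply Tendsto.add tendsto_inv_k2
  have h : (fun k : ℕ => (1/2:ℝ)^(2*k)) = fun k : ℕ => ((1/4:ℝ))^k := by
    funext k; rw [pow_mul]; norm_num
  rw [h]
  exact tendsto_pow_atTop_nhds_zero_of_lt_one (by norm_num) (by norm_num)

lemma A_even_tendsto : Tendsto (fun k => A (2 * k)) atTop (nhds 1) := by
  rw [tendsto_iff_norm_sub_tendsto_zero]
  have h2k : Tendsto (fun k : ℕ => 2 * k) atTop atTop :=
    tendsto_atTop_mono (fun k => by simp only [id_eq]; omega) tendsto_id
  have hE2 : Tendsto (fun k : ℕ => (((2*k : ℕ):ℝ)+2)⁻¹ + (1/2:ℝ)^(2*(2*k))) atTop (nhds 0) :=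
    E_tendsto.comp h2k
  apply squeeze_zero' (Eventually.of_forall fun k => norm_nonneg _) _ hE2
  filter_upwards [eventually_ge_atTop 4] with k hk4
  have h7 : 7 ≤ 2 * k := by omega
  have h := main_est h7
  have hPval : ∑ j ∈ Finset.range (2*k+1), (-1:ℝ)^j = 1 := by
    rw [neg_one_geom_sum, if_neg]
    simp [Nat.even_add_one, parity_simps]
  rw [hPval] at h
  simpa using h

lemma A_odd_tendsto : Tendsto (fun k => A (2 * k + 1)) atTop (nhds 0) := by
  rw [tendsto_iff_norm_sub_tendsto_zero]
  have h2k : Tendsto (fun k : ℕ => 2 * k + 1) atTop atTop :=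
    tendsto_atTop_mono (fun k => by simp only [id_eq]; omega) tendsto_id
  have hE2 : Tendsto (fun k : ℕ => (((2*k+1 : ℕ):ℝ)+2)⁻¹ + (1/2:ℝ)^(2*(2*k+1))) atTop (nhds 0) :=
    E_tendsto.comp h2k
  apply squeeze_zero' (Eventually.of_forall fun k => norm_nonneg _) _ hE2
  filter_upwards [eventually_ge_atTop 3] with k hk3
  have h7 : 7 ≤ 2 * k + 1 := by omega
  have h := main_est h7
  have hPval : ∑ j ∈ Finset.range (2*k+1+1), (-1:ℝ)^j = 0 := by
    rw [neg_one_geom_sum, if_pos]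
    simp [Nat.even_add_one, parity_simps]
  rw [hPval] at h
  simpa using h

end
end Stmt11

theorem stmt11 : ∃ (r : ℕ → ℝ) (s : ℕ → ℝ) (A : ℕ → ℝ),
    StrictMono r ∧ r 0 = 1 ∧ (∀ k, s k ∈ Set.Ioo (0 : ℝ) 1) ∧
    Filter.Tendsto s Filter.atTop (nhds 0) ∧
    (∀ k, Filter.Tendsto (fun n => ∑ j ∈ Finset.range n, (-1 : ℝ) ^ j * r j ^ (-(s k)))
      Filter.atTop (nhds (A k))) ∧
    Filter.Tendsto (fun k => A (2 * k)) Filter.atTop (nhds 1) ∧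
    Filter.Tendsto (fun k => A (2 * k + 1)) Filter.atTop (nhds 0) := by
  exact ⟨Stmt11.r, Stmt11.s, Stmt11.A, Stmt11.r_strictMono, Stmt11.r_zero,
    fun k => ⟨Stmt11.s_pos k, Stmt11.s_lt_one k⟩, Stmt11.s_tendsto,
    fun k => Stmt11.partial_tendsto k, Stmt11.A_even_tendsto, Stmt11.A_odd_tendsto⟩
end

section
/- Let N ≥ 2, s ∈ (0,1), 0 < r < 1, x ∈ ℝ^N, and suppose u ∈ L^∞(ℝ^N) is nonnegative, not identically zero, and s-harmonic in an open set containing the closed ball of radius r around x, so that the Poisson representation u(z) = γ_{N,s} ∫_{|y−x|>r/2} ((r²/4 − |z−x|²)^s / ((|y−x|² − r²/4)^s |z−y|^N)) u(y) dy holds for z ∈ B_{r/2}(x). Then for all x₁, x₂ ∈ B_{r/4}(x): 2^{−4N−2} ≤ u(x₁)/u(x₂) ≤ 2^{4N+2}. -/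
open MeasureTheory Real Set Metric
open scoped ENNReal NNReal

section aux

lemma pow_sub_pow_le_lin (n : ℕ) {a b d : ℝ} (hb : 0 ≤ b) (hba : b ≤ a) (had : a ≤ d)
    (hd : 1 ≤ d) : a ^ n - b ^ n ≤ n * d ^ n * (a - b) := by
  induction n with
  | zero => simp
  | succ n ih =>
    have ha : 0 ≤ a := hb.trans hba
    have hbn : b ^ n ≤ d ^ n := pow_le_pow_left₀ hb (hba.trans had) n
    have hdn : (1:ℝ) ≤ d ^ n := one_le_pow₀ hd
    have hdn0 : (0:ℝ) ≤ d ^ n := by linarith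
    have key : a ^ (n+1) - b ^ (n+1) = a * (a ^ n - b ^ n) + (a - b) * b ^ n := by ring
    rw [key]
    have h1 : a * (a ^ n - b ^ n) ≤ d * (n * d ^ n * (a - b)) := by
      have h0 : 0 ≤ a ^ n - b ^ n := by
        have := pow_le_pow_left₀ hb hba n; linarith
      calc a * (a ^ n - b ^ n) ≤ d * (a ^ n - b ^ n) := by
            apply mul_le_mul_of_nonneg_right had h0
        _ ≤ d * (n * d ^ n * (a - b)) := by
            apply mul_le_mul_of_nonneg_left ih (by linarith)
    have h2 : (a - b) * b ^ n ≤ (a - b) * d ^ n := by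
      apply mul_le_mul_of_nonneg_left hbn (by linarith)
    have : (n + 1 : ℕ) * d ^ (n+1) * (a - b) = d * (n * d ^ n * (a-b)) + (a-b) * d ^ n + (d^(n+1) - d^n) * (a - b) := by
      push_cast; ring
    rw [this]
    have h3 : 0 ≤ (d^(n+1) - d^n) * (a - b) := by
      apply mul_nonneg _ (by linarith)
      have : d ^ n ≤ d ^ (n+1) := pow_le_pow_right₀ (by linarith) (by omega)
      linarith
    linarith

lemma annulus_integrable {E : Type*} [NormedAddCommGroup E] [NormedSpace ℝ E]
    [FiniteDimensional ℝ E] [MeasurableSpace E] [BorelSpace E]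
    (μ : Measure E) [μ.IsAddHaarMeasure] (x : E) {s c b : ℝ}
    (hs0 : 0 < s) (hs1 : s < 1) (hc : 0 < c) :
    IntegrableOn (fun y => (‖y - x‖ - c) ^ (-s)) {y | c < ‖y - x‖ ∧ ‖y - x‖ ≤ b} μ := by
  set n := Module.finrank ℝ E with hn
  have hmeas : Measurable fun y : E => ‖y - x‖ := (measurable_id.sub_const x).norm
  have hA : MeasurableSet {y : E | c < ‖y - x‖ ∧ ‖y - x‖ ≤ b} :=
    hmeas (measurableSet_Ioc (a := c) (b := b))
  set A := {y : E | c < ‖y - x‖ ∧ ‖y - x‖ ≤ b} with hAdef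
  have hfm : Measurable fun y : E => (‖y - x‖ - c) ^ (-s) := by fun_prop
  constructor
  · exact hfm.aestronglyMeasurable
  · -- finite integral
    have hnn : 0 ≤ᵐ[μ.restrict A] fun y : E => (‖y - x‖ - c) ^ (-s) := by
      filter_upwards [ae_restrict_mem hA] with y hy
      exact rpow_nonneg (by have := hy.1; linarith) _
    rw [hasFiniteIntegral_iff_ofReal hnn]
    rw [lintegral_eq_lintegral_meas_le (μ.restrict A) hnn hfm.aemeasurable]
    have hfin : μ A < ⊤ := by
      refine lt_of_le_of_lt (measure_mono ?_) (measure_closedBall_lt_top (x := x) (r := |b|))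
      intro y hy
      rw [mem_closedBall_iff_norm]
      exact hy.2.trans (le_abs_self b)
    set C : ℝ≥0∞ := ENNReal.ofReal ((n : ℝ) * (c+1)^n) * μ (ball (0:E) 1) with hC
    have hCne : C ≠ ⊤ := ENNReal.mul_ne_top ENNReal.ofReal_ne_top measure_ball_lt_top.ne
    have hbd : ∀ t ∈ Ioi (1 : ℝ), (μ.restrict A) {y : E | t ≤ (‖y - x‖ - c) ^ (-s)} ≤
        C * ENNReal.ofReal (t ^ (-s⁻¹)) := by
      intro t ht
      have ht1 : (1:ℝ) < t := ht
      have ht0 : (0:ℝ) < t := by linarith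
      have hd0 : 0 < t ^ (-s⁻¹) := rpow_pos_of_pos ht0 _
      have hd1 : t ^ (-s⁻¹) ≤ 1 :=
        rpow_le_one_of_one_le_of_nonpos ht1.le (neg_nonpos.mpr (inv_nonneg.mpr hs0.le))
      rw [Measure.restrict_apply' hA]
      have hsub : {y : E | t ≤ (‖y - x‖ - c) ^ (-s)} ∩ A ⊆
          closedBall x (c + t ^ (-s⁻¹)) \ closedBall x c := by
        rintro y ⟨hy1, hy2, _⟩
        have hgt : (0:ℝ) < ‖y - x‖ - c := by linarith
        constructor
        · rw [mem_closedBall_iff_norm]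
          have h2 := (le_rpow_inv_iff_of_neg hgt ht0
            (neg_neg_iff_pos.mpr hs0 : -s < 0)).mpr hy1
          rw [← neg_inv] at h2
          linarith
        · intro hmem
          rw [mem_closedBall_iff_norm] at hmem
          linarith
      refine le_trans (measure_mono hsub) ?_
      have hcm : closedBall x c ⊆ closedBall x (c + t ^ (-s⁻¹)) :=
        closedBall_subset_closedBall (by linarith)
      rw [measure_diff hcm measurableSet_closedBall.nullMeasurableSet
        measure_closedBall_lt_top.ne,
        μ.addHaar_closedBall x (by linarith : (0:ℝ) ≤ c + t ^ (-s⁻¹)),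
        μ.addHaar_closedBall x hc.le,
        ← ENNReal.sub_mul (fun _ _ => measure_ball_lt_top.ne),
        ← ENNReal.ofReal_sub _ (by positivity), hC, mul_right_comm]
      gcongr
      rw [← ENNReal.ofReal_mul (by positivity)]
      gcongr
      calc (c + t ^ (-s⁻¹)) ^ n - c ^ n
          ≤ (n : ℝ) * (c+1)^n * ((c + t ^ (-s⁻¹)) - c) :=
            pow_sub_pow_le_lin n hc.le (by linarith) (by linarith) (by linarith)
        _ = (n : ℝ) * (c+1)^n * t ^ (-s⁻¹) := by ring
    calc ∫⁻ t in Ioi (0:ℝ), (μ.restrict A) {a : E | t ≤ (‖a - x‖ - c) ^ (-s)}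
        ≤ ∫⁻ t in Ioc (0:ℝ) 1 ∪ Ioi 1, (μ.restrict A) {a : E | t ≤ (‖a - x‖ - c) ^ (-s)} :=
          lintegral_mono_set Ioi_subset_Ioc_union_Ioi
      _ ≤ (∫⁻ t in Ioc (0:ℝ) 1, (μ.restrict A) {a : E | t ≤ (‖a - x‖ - c) ^ (-s)})
          + ∫⁻ t in Ioi (1:ℝ), (μ.restrict A) {a : E | t ≤ (‖a - x‖ - c) ^ (-s)} :=
          lintegral_union_le _ _ _
      _ < ⊤ := by
          refine ENNReal.add_lt_top.2 ⟨?_, ?_⟩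
          · have hle : ∀ t : ℝ, (μ.restrict A) {a : E | t ≤ (‖a - x‖ - c) ^ (-s)} ≤ μ A :=
              fun t => le_trans (measure_mono (subset_univ _))
                (le_of_eq (Measure.restrict_apply_univ A))
            refine lt_of_le_of_lt (lintegral_mono (g := fun _ => μ A) hle) ?_
            rw [setLIntegral_const]
            exact ENNReal.mul_lt_top hfin (by simp [Real.volume_Ioc])
          · refine lt_of_le_of_lt (setLIntegral_mono' measurableSet_Ioi hbd) ?_
            rw [lintegral_const_mul' _ _ hCne]
            refine ENNReal.mul_lt_top hCne.lt_top ?_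
            have hint : IntegrableOn (fun t : ℝ => t ^ (-s⁻¹)) (Ioi (1:ℝ)) := by
              refine integrableOn_Ioi_rpow_of_lt ?_ zero_lt_one
              have : (1:ℝ) < s⁻¹ := (one_lt_inv₀ hs0).mpr hs1
              linarith
            have h2 := hint.2
            have hnn2 : 0 ≤ᵐ[volume.restrict (Ioi (1:ℝ))] fun t : ℝ => t ^ (-s⁻¹) := by
              filter_upwards [ae_restrict_mem measurableSet_Ioi] with t ht
              exact rpow_nonneg (by simp at ht; linarith) _
            rwa [hasFiniteIntegral_iff_ofReal hnn2] at h2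

/-- The Poisson-type kernel. -/
noncomputable def sKer (N : ℕ) (s r : ℝ) (x z y : EuclideanSpace ℝ (Fin N)) : ℝ :=
  (r ^ 2 / 4 - ‖z - x‖ ^ 2) ^ s / ((‖y - x‖ ^ 2 - r ^ 2 / 4) ^ s * ‖z - y‖ ^ (N : ℝ))

end aux

set_option maxHeartbeats 1000000 in
theorem stmt17 (N : ℕ) (hN : 2 ≤ N) (s : ℝ) (hs : s ∈ Set.Ioo (0 : ℝ) 1)
    (r : ℝ) (hr : r ∈ Set.Ioo (0 : ℝ) 1) (x : EuclideanSpace ℝ (Fin N))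
    (u : EuclideanSpace ℝ (Fin N) → ℝ) (hum : Measurable u)
    (hub : ∃ M, ∀ z, |u z| ≤ M) (hnn : ∀ z, 0 ≤ u z)
    (hnt : ¬ (u =ᵐ[MeasureTheory.volume] (0 : EuclideanSpace ℝ (Fin N) → ℝ)))
    (γ : ℝ)
    (hγ : γ = Real.Gamma ((N : ℝ) / 2) /
      (Real.pi ^ ((N : ℝ) / 2) * Real.Gamma (1 - s) * Real.Gamma s))
    (hrep : ∀ z ∈ Metric.ball x (r / 2), u z = γ *
      ∫ y in {y : EuclideanSpace ℝ (Fin N) | r / 2 < ‖y - x‖},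
        (r ^ 2 / 4 - ‖z - x‖ ^ 2) ^ s /
          ((‖y - x‖ ^ 2 - r ^ 2 / 4) ^ s * ‖z - y‖ ^ (N : ℝ)) * u y) :
    ∀ x₁ ∈ Metric.ball x (r / 4), ∀ x₂ ∈ Metric.ball x (r / 4),
      (2 : ℝ) ^ (-(4 * (N : ℝ)) - 2) ≤ u x₁ / u x₂ ∧
        u x₁ / u x₂ ≤ (2 : ℝ) ^ (4 * (N : ℝ) + 2) := by
  obtain ⟨hs0, hs1⟩ := hs
  obtain ⟨hr0, hr1⟩ := hr
  obtain ⟨M, hM⟩ := hub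
  have hM0 : 0 ≤ M := le_trans (abs_nonneg _) (hM x)
  set S : Set (EuclideanSpace ℝ (Fin N)) := {y | r / 2 < ‖y - x‖} with hSdef
  have hnormmeas : Measurable fun y : EuclideanSpace ℝ (Fin N) => ‖y - x‖ :=
    (measurable_id.sub_const x).norm
  have hSmeas : MeasurableSet S := hnormmeas (measurableSet_Ioi (a := r / 2))
  have hrep' : ∀ z ∈ Metric.ball x (r / 2),
      u z = γ * ∫ y in S, sKer N s r x z y * u y := by
    intro z hz
    simpa only [sKer] using hrep z hz
  have hγ0 : 0 < γ := by
    rw [hγ]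
    have h1 : 0 < Real.Gamma ((N : ℝ) / 2) := Real.Gamma_pos_of_pos (by positivity)
    have h2 : 0 < Real.Gamma (1 - s) := Real.Gamma_pos_of_pos (by linarith)
    have h3 : 0 < Real.Gamma s := Real.Gamma_pos_of_pos hs0
    have h4 : 0 < Real.pi ^ ((N : ℝ) / 2) := rpow_pos_of_pos Real.pi_pos _
    positivity
  -- geometry
  have hgeom : ∀ z y : EuclideanSpace ℝ (Fin N), ‖z - x‖ < r / 4 → r / 2 < ‖y - x‖ →
      ‖y - x‖ / 2 ≤ ‖z - y‖ ∧ ‖z - y‖ ≤ 3 / 2 * ‖y - x‖ ∧ r / 4 ≤ ‖z - y‖ := by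
    intro z y hz hy
    have h1 : ‖y - x‖ ≤ ‖y - z‖ + ‖z - x‖ := by
      calc ‖y - x‖ = ‖(y - z) + (z - x)‖ := by abel_nf
        _ ≤ ‖y - z‖ + ‖z - x‖ := norm_add_le _ _
    have h2 : ‖z - y‖ = ‖y - z‖ := norm_sub_rev _ _
    have h3 : ‖z - y‖ ≤ ‖z - x‖ + ‖y - x‖ := by
      calc ‖z - y‖ = ‖(z - x) - (y - x)‖ := by abel_nf
        _ ≤ ‖z - x‖ + ‖y - x‖ := norm_sub_le _ _
    refine ⟨by linarith, by linarith, by linarith⟩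
  -- positivity facts for the pieces
  have hDpos : ∀ y : EuclideanSpace ℝ (Fin N), r / 2 < ‖y - x‖ →
      0 < (‖y - x‖ ^ 2 - r ^ 2 / 4) ^ s := by
    intro y hy
    apply rpow_pos_of_pos
    nlinarith
  have hApos : ∀ z : EuclideanSpace ℝ (Fin N), ‖z - x‖ < r / 4 →
      0 < (r ^ 2 / 4 - ‖z - x‖ ^ 2) ^ s := by
    intro z hz
    apply rpow_pos_of_pos
    nlinarith [norm_nonneg (z - x)]
  have hBpos : ∀ z y : EuclideanSpace ℝ (Fin N), ‖z - x‖ < r / 4 → r / 2 < ‖y - x‖ →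
      0 < ‖z - y‖ ^ (N : ℝ) := by
    intro z y hz hy
    exact rpow_pos_of_pos (lt_of_lt_of_le (by linarith) (hgeom z y hz hy).2.2) _
  have hKpos : ∀ z y : EuclideanSpace ℝ (Fin N), ‖z - x‖ < r / 4 → r / 2 < ‖y - x‖ →
      0 < sKer N s r x z y := by
    intro z y hz hy
    exact div_pos (hApos z hz) (mul_pos (hDpos y hy) (hBpos z y hz hy))
  -- kernel comparison
  have hcomp : ∀ z₁ z₂ y : EuclideanSpace ℝ (Fin N), ‖z₁ - x‖ < r / 4 → ‖z₂ - x‖ < r / 4 →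
      r / 2 < ‖y - x‖ →
      sKer N s r x z₁ y ≤ (2 : ℝ) ^ (4 * (N : ℝ) + 2) * sKer N s r x z₂ y := by
    intro z₁ z₂ y h1 h2 hy
    obtain ⟨g1a, g1b, g1c⟩ := hgeom z₁ y h1 hy
    obtain ⟨g2a, g2b, g2c⟩ := hgeom z₂ y h2 hy
    have hD := hDpos y hy
    have hB1 := hBpos z₁ y h1 hy
    have hB2 := hBpos z₂ y h2 hy
    have hA1 := hApos z₁ h1
    have hA2 := hApos z₂ h2
    have hCeq : (2 : ℝ) ^ (4 * (N : ℝ) + 2) = ((2:ℝ) ^ (4 * N + 2 : ℕ)) := by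
      rw [← rpow_natCast 2 (4 * N + 2)]
      norm_num
    -- numerator bounds
    have hA1' : (r ^ 2 / 4 - ‖z₁ - x‖ ^ 2) ^ s ≤ (r ^ 2 / 4) ^ s := by
      apply rpow_le_rpow (by nlinarith [norm_nonneg (z₁ - x)]) (by nlinarith [sq_nonneg ‖z₁ - x‖]) hs0.le
    have hA2' : (3 * r ^ 2 / 16 : ℝ) ^ s ≤ (r ^ 2 / 4 - ‖z₂ - x‖ ^ 2) ^ s := by
      apply rpow_le_rpow (by positivity) (by nlinarith [norm_nonneg (z₂ - x)]) hs0.le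
    have h43 : (r ^ 2 / 4 : ℝ) ^ s ≤ 2 * (3 * r ^ 2 / 16) ^ s := by
      have e1 : (r ^ 2 / 4 : ℝ) = (4 / 3) * (3 * r ^ 2 / 16) := by ring
      rw [e1, mul_rpow (by norm_num) (by positivity)]
      apply mul_le_mul_of_nonneg_right _ (rpow_nonneg (by positivity) _)
      calc (4 / 3 : ℝ) ^ s ≤ (4 / 3 : ℝ) ^ (1 : ℝ) :=
            rpow_le_rpow_of_exponent_le (by norm_num) hs1.le
        _ ≤ 2 := by rw [rpow_one]; norm_num
    -- denominator norm bounds, in natural powers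
    have hBn : ∀ w : EuclideanSpace ℝ (Fin N), ‖w‖ ^ (N : ℝ) = ‖w‖ ^ N := fun w =>
      rpow_natCast _ _
    have hB : ‖z₂ - y‖ ^ (N : ℝ) ≤ 3 ^ N * ‖z₁ - y‖ ^ (N : ℝ) := by
      rw [hBn, hBn, ← mul_pow]
      apply pow_le_pow_left₀ (norm_nonneg _) (by linarith) N
    -- assemble
    unfold sKer
    rw [div_le_iff₀ (mul_pos hD hB1), hCeq]
    calc (r ^ 2 / 4 - ‖z₁ - x‖ ^ 2) ^ s
        ≤ (2 * (3 * r ^ 2 / 16) ^ s) := hA1'.trans h43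
      _ ≤ 2 * (r ^ 2 / 4 - ‖z₂ - x‖ ^ 2) ^ s :=
          mul_le_mul_of_nonneg_left hA2' (by norm_num)
      _ = 2 * (r ^ 2 / 4 - ‖z₂ - x‖ ^ 2) ^ s /
            ((‖y - x‖ ^ 2 - r ^ 2 / 4) ^ s * ‖z₂ - y‖ ^ (N : ℝ)) *
            ((‖y - x‖ ^ 2 - r ^ 2 / 4) ^ s * ‖z₂ - y‖ ^ (N : ℝ)) :=
          (div_mul_cancel₀ _ (ne_of_gt (mul_pos hD hB2))).symm
      _ ≤ 2 * (r ^ 2 / 4 - ‖z₂ - x‖ ^ 2) ^ s /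
            ((‖y - x‖ ^ 2 - r ^ 2 / 4) ^ s * ‖z₂ - y‖ ^ (N : ℝ)) *
            ((‖y - x‖ ^ 2 - r ^ 2 / 4) ^ s * (3 ^ N * ‖z₁ - y‖ ^ (N : ℝ))) := by
          apply mul_le_mul_of_nonneg_left
            (mul_le_mul_of_nonneg_left hB hD.le)
            (by positivity)
      _ ≤ (2 : ℝ) ^ (4 * N + 2 : ℕ) * ((r ^ 2 / 4 - ‖z₂ - x‖ ^ 2) ^ s /
            ((‖y - x‖ ^ 2 - r ^ 2 / 4) ^ s * ‖z₂ - y‖ ^ (N : ℝ))) *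
            ((‖y - x‖ ^ 2 - r ^ 2 / 4) ^ s * ‖z₁ - y‖ ^ (N : ℝ)) := by
          have h3N : (2 : ℝ) * 3 ^ N ≤ 2 ^ (4 * N + 2 : ℕ) := by
            calc (2:ℝ) * 3 ^ N ≤ 2 * 4 ^ N := by
                  apply mul_le_mul_of_nonneg_left (pow_le_pow_left₀ (by norm_num) (by norm_num) N) (by norm_num)
              _ = 2 ^ (2 * N + 1) := by
                  rw [show (4:ℝ) = 2 ^ 2 by norm_num, ← pow_mul, pow_succ, mul_comm]
              _ ≤ 2 ^ (4 * N + 2 : ℕ) := pow_le_pow_right₀ (by norm_num) (by omega)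
          have hK2 : 0 ≤ (r ^ 2 / 4 - ‖z₂ - x‖ ^ 2) ^ s /
              ((‖y - x‖ ^ 2 - r ^ 2 / 4) ^ s * ‖z₂ - y‖ ^ (N : ℝ)) :=
            le_of_lt (div_pos hA2 (mul_pos hD hB2))
          have hfac : 0 ≤ (‖y - x‖ ^ 2 - r ^ 2 / 4) ^ s * ‖z₁ - y‖ ^ (N : ℝ) :=
            (mul_pos hD hB1).le
          calc 2 * (r ^ 2 / 4 - ‖z₂ - x‖ ^ 2) ^ s /
                ((‖y - x‖ ^ 2 - r ^ 2 / 4) ^ s * ‖z₂ - y‖ ^ (N : ℝ)) *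
                ((‖y - x‖ ^ 2 - r ^ 2 / 4) ^ s * (3 ^ N * ‖z₁ - y‖ ^ (N : ℝ)))
              = (2 * 3 ^ N) * ((r ^ 2 / 4 - ‖z₂ - x‖ ^ 2) ^ s /
                ((‖y - x‖ ^ 2 - r ^ 2 / 4) ^ s * ‖z₂ - y‖ ^ (N : ℝ))) *
                ((‖y - x‖ ^ 2 - r ^ 2 / 4) ^ s * ‖z₁ - y‖ ^ (N : ℝ)) := by ring
            _ ≤ (2 : ℝ) ^ (4 * N + 2 : ℕ) * ((r ^ 2 / 4 - ‖z₂ - x‖ ^ 2) ^ s /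
                ((‖y - x‖ ^ 2 - r ^ 2 / 4) ^ s * ‖z₂ - y‖ ^ (N : ℝ))) *
                ((‖y - x‖ ^ 2 - r ^ 2 / 4) ^ s * ‖z₁ - y‖ ^ (N : ℝ)) := by
                apply mul_le_mul_of_nonneg_right (mul_le_mul_of_nonneg_right h3N hK2) hfac
  -- integrability
  have hint : ∀ z : EuclideanSpace ℝ (Fin N), ‖z - x‖ < r / 4 →
      IntegrableOn (fun y => sKer N s r x z y * u y) S volume := by
    intro z hz
    have hmeasK : Measurable fun y => sKer N s r x z y * u y := by
      unfold sKer; fun_prop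
    have hA1 : (r ^ 2 / 4 - ‖z - x‖ ^ 2) ^ s ≤ 1 := by
      apply rpow_le_one (by nlinarith [norm_nonneg (z - x)]) (by nlinarith [norm_nonneg (z - x)]) hs0.le
    have hS12 : S = {y : EuclideanSpace ℝ (Fin N) | r / 2 < ‖y - x‖ ∧ ‖y - x‖ ≤ r} ∪
        {y : EuclideanSpace ℝ (Fin N) | r < ‖y - x‖} := by
      ext y
      simp only [hSdef, mem_setOf_eq, mem_union]
      constructor
      · intro h
        by_cases hyr : ‖y - x‖ ≤ r
        · exact Or.inl ⟨h, hyr⟩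
        · exact Or.inr (by linarith)
      · rintro (⟨h, _⟩ | h) <;> linarith
    rw [hS12]
    apply IntegrableOn.union
    · -- annulus part
      have hann_meas : MeasurableSet {y : EuclideanSpace ℝ (Fin N) |
          r / 2 < ‖y - x‖ ∧ ‖y - x‖ ≤ r} := hnormmeas (measurableSet_Ioc (a := r/2) (b := r))
      refine Integrable.mono'
        ((annulus_integrable volume x hs0 hs1 (by linarith : (0:ℝ) < r/2)
          (b := r)).const_mul (M / (r ^ s * (r/4) ^ N)))
        hmeasK.aestronglyMeasurable.restrict ?_
      filter_upwards [ae_restrict_mem hann_meas] with y hy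
      obtain ⟨hy1, hy2⟩ := hy
      obtain ⟨g1, g2, g3⟩ := hgeom z y hz hy1
      have ht0 : (0:ℝ) < ‖y - x‖ := by linarith
      have htr : (0:ℝ) ≤ ‖y - x‖ - r/2 := by linarith
      have hD := hDpos y hy1
      have hB := hBpos z y hz hy1
      -- lower bound on denominator
      have hDlow : (‖y - x‖ - r/2) ^ s * r ^ s ≤ (‖y - x‖ ^ 2 - r ^ 2 / 4) ^ s := by
        have e2 : ‖y - x‖ ^ 2 - r ^ 2 / 4 = (‖y - x‖ - r/2) * (‖y - x‖ + r/2) := by ring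
        rw [e2, mul_rpow htr (by linarith)]
        apply mul_le_mul_of_nonneg_left _ (rpow_nonneg htr _)
        exact rpow_le_rpow hr0.le (by linarith) hs0.le
      have hBlow : (r/4) ^ N ≤ ‖z - y‖ ^ (N : ℝ) := by
        rw [rpow_natCast]
        exact pow_le_pow_left₀ (by linarith) g3 N
      have hlowpos : (0:ℝ) < (‖y - x‖ - r/2) ^ s * r ^ s * (r/4) ^ N :=
        mul_pos (mul_pos (rpow_pos_of_pos (by linarith) s) (rpow_pos_of_pos hr0 s))
          (pow_pos (by linarith) N)
      have hKle : sKer N s r x z y ≤ 1 / ((‖y - x‖ - r/2) ^ s * r ^ s * (r/4) ^ N) := by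
        unfold sKer
        exact div_le_div₀ zero_le_one hA1 hlowpos
          (mul_le_mul hDlow hBlow (by positivity) hD.le)
      have hK0 := hKpos z y hz hy1
      calc ‖sKer N s r x z y * u y‖ = sKer N s r x z y * |u y| := by
            rw [norm_mul, Real.norm_eq_abs, Real.norm_eq_abs, abs_of_pos hK0]
        _ ≤ (1 / ((‖y - x‖ - r/2) ^ s * r ^ s * (r/4) ^ N)) * M :=
            mul_le_mul hKle (hM y) (abs_nonneg _) (by positivity)
        _ = M / (r ^ s * (r/4) ^ N) * ((‖y - x‖ - r/2) ^ (-s)) := by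
            have h1 : ((‖y - x‖ - r/2):ℝ) ^ s ≠ 0 := (rpow_pos_of_pos (by linarith) s).ne'
            have h2 : (r:ℝ) ^ s ≠ 0 := (rpow_pos_of_pos hr0 s).ne'
            have h3 : ((r/4:ℝ)) ^ N ≠ 0 := (pow_pos (by linarith) N).ne'
            rw [rpow_neg htr]
            field_simp
    · -- tail part
      have htail_meas : MeasurableSet {y : EuclideanSpace ℝ (Fin N) | r < ‖y - x‖} :=
        hnormmeas (measurableSet_Ioi (a := r))
      set p : ℝ := (N : ℝ) + 2 * s with hp
      have hp0 : 0 < p := by positivity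
      have hjap : Integrable (fun y : EuclideanSpace ℝ (Fin N) => (1 + ‖y - x‖) ^ (-p))
          volume := by
        have h1 : ((Module.finrank ℝ (EuclideanSpace ℝ (Fin N))) : ℝ) < p := by
          rw [finrank_euclideanSpace_fin, hp]; linarith
        exact (integrable_one_add_norm h1).comp_sub_right x
      refine Integrable.mono'
        ((hjap.const_mul (M * 2 ^ (N+1) * (1 + 1/r) ^ p)).integrableOn)
        hmeasK.aestronglyMeasurable.restrict ?_
      filter_upwards [ae_restrict_mem htail_meas] with y hy
      have hy1 : r < ‖y - x‖ := hy
      have hyS : r / 2 < ‖y - x‖ := by linarith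
      obtain ⟨g1, g2, g3⟩ := hgeom z y hz hyS
      have ht0 : (0:ℝ) < ‖y - x‖ := by linarith
      have hD := hDpos y hyS
      have hB := hBpos z y hz hyS
      have hK0 := hKpos z y hz hyS
      -- lower bound on denominator
      have hDlow : (1/2 : ℝ) * ‖y - x‖ ^ (2*s) ≤ (‖y - x‖ ^ 2 - r ^ 2 / 4) ^ s := by
        have e1 : ((3/4 : ℝ) * ‖y - x‖ ^ 2) ^ s = (3/4 : ℝ) ^ s * ‖y - x‖ ^ (2*s) := by
          rw [mul_rpow (by norm_num) (by positivity), ← rpow_natCast ‖y - x‖ 2,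
            ← rpow_mul ht0.le]
          norm_num
        have e2 : ((3/4 : ℝ) * ‖y - x‖ ^ 2) ^ s ≤ (‖y - x‖ ^ 2 - r ^ 2 / 4) ^ s := by
          apply rpow_le_rpow (by positivity) (by nlinarith) hs0.le
        have e3 : (1/2 : ℝ) ≤ (3/4 : ℝ) ^ s := by
          calc (1/2 : ℝ) ≤ 3/4 := by norm_num
            _ = (3/4 : ℝ) ^ (1:ℝ) := (rpow_one _).symm
            _ ≤ (3/4 : ℝ) ^ s := rpow_le_rpow_of_exponent_ge (by norm_num) (by norm_num) hs1.le
        calc (1/2 : ℝ) * ‖y - x‖ ^ (2*s) ≤ (3/4 : ℝ) ^ s * ‖y - x‖ ^ (2*s) :=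
              mul_le_mul_of_nonneg_right e3 (by positivity)
          _ = ((3/4 : ℝ) * ‖y - x‖ ^ 2) ^ s := e1.symm
          _ ≤ _ := e2
      have hBlow : (‖y - x‖ / 2) ^ N ≤ ‖z - y‖ ^ (N : ℝ) := by
        rw [rpow_natCast]
        exact pow_le_pow_left₀ (by linarith) g1 N
      have hlow_eq : ((1:ℝ)/2) ^ (N+1) * ‖y - x‖ ^ p =
          ((1/2 : ℝ) * ‖y - x‖ ^ (2*s)) * (‖y - x‖ / 2) ^ N := by
        rw [hp, rpow_add ht0, rpow_natCast]
        ring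
      have hlowpos : (0:ℝ) < ((1:ℝ)/2) ^ (N+1) * ‖y - x‖ ^ p :=
        mul_pos (pow_pos (by norm_num) _) (rpow_pos_of_pos ht0 _)
      have hKle : sKer N s r x z y ≤ 1 / (((1:ℝ)/2) ^ (N+1) * ‖y - x‖ ^ p) := by
        unfold sKer
        apply div_le_div₀ zero_le_one hA1 hlowpos
        rw [hlow_eq]
        exact mul_le_mul hDlow hBlow (by positivity) hD.le
      -- compare ‖y-x‖^(-p) with (1+‖y-x‖)^(-p)
      have hcmp : (‖y - x‖ ^ p)⁻¹ ≤ (1 + 1/r) ^ p * ((1 + ‖y - x‖) ^ p)⁻¹ := by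
        have hpow : (1 + ‖y - x‖) ^ p ≤ (1 + 1/r) ^ p * ‖y - x‖ ^ p := by
          rw [← mul_rpow (by positivity) ht0.le]
          apply rpow_le_rpow (by positivity) _ hp0.le
          have h1r : 1 ≤ ‖y - x‖ / r := (one_le_div hr0).mpr hy1.le
          calc 1 + ‖y - x‖ ≤ ‖y - x‖ / r + ‖y - x‖ := by
                have : (1:ℝ) ≤ ‖y - x‖ / r := h1r
                linarith
            _ = (1 + 1/r) * ‖y - x‖ := by field_simp; ring
        have hC' : (0:ℝ) < (1 + 1/r) ^ p := rpow_pos_of_pos (by positivity) _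
        have hb0 : (0:ℝ) < (1 + ‖y - x‖) ^ p := rpow_pos_of_pos (by positivity) _
        have ha0 : (0:ℝ) < ‖y - x‖ ^ p := rpow_pos_of_pos ht0 _
        have h1 : (1 + ‖y - x‖) ^ p / (1 + 1/r) ^ p ≤ ‖y - x‖ ^ p :=
          (div_le_iff₀ hC').mpr (by linarith [hpow])
        have h2 : (‖y - x‖ ^ p)⁻¹ ≤ ((1 + ‖y - x‖) ^ p / (1 + 1/r) ^ p)⁻¹ := by
          gcongr
        rwa [inv_div, div_eq_mul_inv] at h2
      calc ‖sKer N s r x z y * u y‖ = sKer N s r x z y * |u y| := by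
            rw [norm_mul, Real.norm_eq_abs, Real.norm_eq_abs, abs_of_pos hK0]
        _ ≤ (1 / (((1:ℝ)/2) ^ (N+1) * ‖y - x‖ ^ p)) * M :=
            mul_le_mul hKle (hM y) (abs_nonneg _) (by positivity)
        _ = M * 2 ^ (N+1) * (‖y - x‖ ^ p)⁻¹ := by
            have hap : (‖y - x‖ ^ p) ≠ 0 := (rpow_pos_of_pos ht0 _).ne'
            rw [one_div_pow]
            field_simp
        _ ≤ M * 2 ^ (N+1) * ((1 + 1/r) ^ p * ((1 + ‖y - x‖) ^ p)⁻¹) := by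
            apply mul_le_mul_of_nonneg_left hcmp (by positivity)
        _ = M * 2 ^ (N+1) * (1 + 1/r) ^ p * (1 + ‖y - x‖) ^ (-p) := by
            rw [rpow_neg (by positivity)]
            ring
  -- positivity of u on the small ball
  have hupos : ∀ z ∈ Metric.ball x (r / 4), 0 < u z := by
    intro z hzball
    have hz : ‖z - x‖ < r / 4 := mem_ball_iff_norm.mp hzball
    have hzb2 : z ∈ Metric.ball x (r / 2) := Metric.ball_subset_ball (by linarith) hzball
    have humeasset : MeasurableSet {y : EuclideanSpace ℝ (Fin N) | u y ≠ 0} :=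
      (hum (measurableSet_singleton (0:ℝ))).compl
    by_cases hA : volume ({y : EuclideanSpace ℝ (Fin N) | u y ≠ 0} ∩ S) = 0
    · exfalso
      have hzero : ∀ w ∈ Metric.ball x (r / 2), u w = 0 := by
        intro w hw
        rw [hrep' w hw]
        have hae : (fun y => sKer N s r x w y * u y) =ᵐ[volume.restrict S]
            (fun _ => (0:ℝ)) := by
          have h0 : volume.restrict S {y : EuclideanSpace ℝ (Fin N) | u y ≠ 0} = 0 := by
            rw [Measure.restrict_apply humeasset]
            exact hA
          have h1 : ∀ᵐ y ∂volume.restrict S, u y = 0 := by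
            rw [ae_iff]
            simpa using h0
          filter_upwards [h1] with y hy
          simp [hy]
        rw [integral_congr_ae hae, integral_zero, mul_zero]
      have hae0 : ∀ᵐ y : EuclideanSpace ℝ (Fin N) ∂volume, u y = 0 := by
        rw [ae_iff]
        refine measure_mono_null
          (t := ({y : EuclideanSpace ℝ (Fin N) | u y ≠ 0} ∩ S) ∪ sphere x (r/2)) ?_ ?_
        · intro y hy
          simp only [mem_setOf_eq] at hy
          rcases lt_trichotomy ‖y - x‖ (r/2) with h | h | h
          · exact absurd (hzero y (mem_ball_iff_norm.mpr h)) hy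
          · exact Or.inr (mem_sphere_iff_norm.mpr h)
          · exact Or.inl ⟨hy, h⟩
        · refine measure_union_null hA ?_
          exact Measure.addHaar_sphere_of_ne_zero volume x (by positivity)
      apply hnt
      filter_upwards [hae0] with y hy
      simpa using hy
    · have hApos' : 0 < volume ({y : EuclideanSpace ℝ (Fin N) | u y ≠ 0} ∩ S) :=
        pos_iff_ne_zero.mpr hA
      have hfpos : 0 < ∫ y in S, sKer N s r x z y * u y := by
        rw [setIntegral_pos_iff_support_of_nonneg_ae ?_ (hint z hz)]
        · apply hApos'.trans_le
          apply measure_mono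
          rintro y ⟨hy1, hy2⟩
          have hy2' : r / 2 < ‖y - x‖ := hy2
          exact ⟨mul_ne_zero (hKpos z y hz hy2').ne' hy1, hy2⟩
        · filter_upwards [ae_restrict_mem hSmeas] with y hy
          exact mul_nonneg (hKpos z y hz hy).le (hnn y)
      rw [hrep' z hzb2]
      exact mul_pos hγ0 hfpos
  -- main inequality
  have hmain : ∀ x₁ ∈ Metric.ball x (r / 4), ∀ x₂ ∈ Metric.ball x (r / 4),
      u x₁ ≤ (2 : ℝ) ^ (4 * (N : ℝ) + 2) * u x₂ := by
    intro x₁ h₁ x₂ h₂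
    have h₁' : ‖x₁ - x‖ < r / 4 := mem_ball_iff_norm.mp h₁
    have h₂' : ‖x₂ - x‖ < r / 4 := mem_ball_iff_norm.mp h₂
    have hb₁ : x₁ ∈ Metric.ball x (r / 2) :=
      Metric.ball_subset_ball (by linarith) h₁
    have hb₂ : x₂ ∈ Metric.ball x (r / 2) :=
      Metric.ball_subset_ball (by linarith) h₂
    rw [hrep' x₁ hb₁, hrep' x₂ hb₂]
    rw [← mul_assoc, mul_comm ((2:ℝ) ^ (4 * (N : ℝ) + 2)) γ, mul_assoc]
    apply mul_le_mul_of_nonneg_left _ hγ0.le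
    rw [← integral_const_mul]
    apply setIntegral_mono_on (hint x₁ h₁') (((hint x₂ h₂').const_mul _)) hSmeas
    intro y hy
    have hy' : r / 2 < ‖y - x‖ := hy
    rw [← mul_assoc]
    exact mul_le_mul_of_nonneg_right (hcomp x₁ x₂ y h₁' h₂' hy') (hnn y)
  intro x₁ h₁ x₂ h₂
  have p₁ := hupos x₁ h₁
  have p₂ := hupos x₂ h₂
  have hC1 : (0:ℝ) < (2 : ℝ) ^ (4 * (N : ℝ) + 2) := rpow_pos_of_pos (by norm_num) _
  constructor
  · have h21 := hmain x₂ h₂ x₁ h₁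
    rw [show -(4 * (N : ℝ)) - 2 = -(4 * (N : ℝ) + 2) by ring, rpow_neg (by norm_num : (0:ℝ) ≤ 2)]
    rw [le_div_iff₀ p₂, inv_mul_le_iff₀ hC1]
    exact h21
  · rw [div_le_iff₀ p₂]
    exact hmain x₁ h₁ x₂ h₂
end
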